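/- arXiv:2505.02962 — 2 statements merged into one kernel-verified Lean document; each statement's English description precedes it below -/
import Mathlib

section
/- Let U ⊆ ℝ² be open and w : U → ℝ a smooth solution of the reduced equation. Write ζ := ∂₁∂₂w + ½(∂₂²w)² and θ⁰ := z₂ − z₁·∂₂²w. Then each of the following functions γ on U satisfies the cosymmetry condition ∂₂²(∂₁γ + (∂₂²w)·∂₂γ) = 0 on U: (i) γ = ∂₂w − ½z₁(∂₂²w)²; (ii) γ = (∂₂w − ½z₁(∂₂²w)²)·∂₂²w − z₂·ζ; (iii) γ = ∂₁w − z₂·ζ + (1/6)z₁(∂₂²w)³; (iv) γ = z₁(∂₁w − z₂·ζ) + z₂·∂₂w − w + (1/12)z₁²(∂₂²w)³ − ¼z₂²·∂₂²w; (v) γ = (∂₂w − ½z₁(∂₂²w)²)·θ⁰ + z₁z₂·ζ. -/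
/-! Write `h = ∂₂²w` and `L = ∂₁ + h ∂₂`, so that the cosymmetry condition reads `∂₂²(Lγ) = 0` and
the reduced equation says `Lh = 0`. Together with the symmetry of mixed partials, the reduced
equation makes `ζ` and `ξ = ∂₁²w − z₂ ∂₁ζ − ⅓ h³` independent of `z₂`. The Leibniz rule for `L`
gives `Lγ = ζ, −z₂ ∂₁ζ, ξ, z₁ ξ, z₂ (2ζ + z₁ ∂₁ζ)` for the five candidates, each of which is
annihilated by `∂₂²`. -/

/-- First-coordinate partial derivative of a function on `ℝ²`. -/
noncomputable def d1 (f : ℝ × ℝ → ℝ) (p : ℝ × ℝ) : ℝ := deriv (fun s => f (s, p.2)) p.1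

/-- Second-coordinate partial derivative of a function on `ℝ²`. -/
noncomputable def d2 (f : ℝ × ℝ → ℝ) (p : ℝ × ℝ) : ℝ := deriv (fun s => f (p.1, s)) p.2

/-- `w` is a smooth solution of the reduced equation `∂₁∂₂²w + (∂₂²w)·(∂₂³w) = 0` on `U`. -/
def IsRedSolOn (w : ℝ × ℝ → ℝ) (U : Set (ℝ × ℝ)) : Prop :=
  ContDiffOn ℝ (⊤ : ℕ∞) w U ∧
    ∀ p ∈ U, d1 (d2 (d2 w)) p + d2 (d2 w) p * d2 (d2 (d2 w)) p = 0

/-- `h` is a smooth solution of the inviscid Burgers equation `∂₁h + h·∂₂h = 0` on `U`. -/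
def IsBurgersSolOn (h : ℝ × ℝ → ℝ) (U : Set (ℝ × ℝ)) : Prop :=
  ContDiffOn ℝ (⊤ : ℕ∞) h U ∧ ∀ p ∈ U, d1 h p + h p * d2 h p = 0

/-- The lowest-order `z₂`-integral `ζ = ∂₁∂₂w + ½(∂₂²w)²` of the reduced equation. -/
noncomputable def zetaInt (w : ℝ × ℝ → ℝ) (p : ℝ × ℝ) : ℝ :=
  d1 (d2 w) p + (1 / 2) * (d2 (d2 w) p) ^ 2

/-- `θ⁰ = z₂ − z₁·∂₂²w`. -/
noncomputable def theta0 (w : ℝ × ℝ → ℝ) (p : ℝ × ℝ) : ℝ := p.2 - p.1 * d2 (d2 w) p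

/-- `θ¹ = ∂₂²w/∂₁∂₂²w + z₁`. -/
noncomputable def theta1 (w : ℝ × ℝ → ℝ) (p : ℝ × ℝ) : ℝ :=
  d2 (d2 w) p / d1 (d2 (d2 w)) p + p.1

/-- `θ² = (∂₂²w/∂₁∂₂²w)·∂₂θ¹`. -/
noncomputable def theta2 (w : ℝ × ℝ → ℝ) (p : ℝ × ℝ) : ℝ :=
  d2 (d2 w) p / d1 (d2 (d2 w)) p * d2 (theta1 w) p

/-- `f` satisfies the generalized-symmetry condition
`∂₂(∂₁(∂₂f) + (∂₂²w)·∂₂(∂₂f)) = 0` of the reduced equation along the solution `w` on `U`. -/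
def IsGenSymCharOn (w f : ℝ × ℝ → ℝ) (U : Set (ℝ × ℝ)) : Prop :=
  ∀ p ∈ U, d2 (fun q => d1 (d2 f) q + d2 (d2 w) q * d2 (d2 f) q) p = 0

/-- `γ` satisfies the cosymmetry condition `∂₂²(∂₁γ + (∂₂²w)·∂₂γ) = 0` of the reduced
equation along the solution `w` on `U`. -/
def IsCosymOn (w γ : ℝ × ℝ → ℝ) (U : Set (ℝ × ℝ)) : Prop :=
  ∀ p ∈ U, d2 (d2 (fun q => d1 γ q + d2 (d2 w) q * d2 γ q)) p = 0

open Filter Topology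

section PartialDerivatives

variable {U : Set (ℝ × ℝ)} {f g : ℝ × ℝ → ℝ} {p : ℝ × ℝ}

theorem hasDerivAt_d1 (hf : DifferentiableAt ℝ f p) :
    HasDerivAt (fun s => f (s, p.2)) (d1 f p) p.1 :=
  (hf.comp (x := p.1) (f := fun s => (s, p.2))
    (differentiableAt_id.prodMk (differentiableAt_const _))).hasDerivAt

theorem hasDerivAt_d2 (hf : DifferentiableAt ℝ f p) :
    HasDerivAt (fun t => f (p.1, t)) (d2 f p) p.2 :=
  (hf.comp (x := p.2) (f := fun t => (p.1, t))
    ((differentiableAt_const _).prodMk differentiableAt_id)).hasDerivAt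

theorem d1_eq_fderiv (hf : DifferentiableAt ℝ f p) : d1 f p = fderiv ℝ f p (1, 0) :=
  (hasDerivAt_d1 hf).unique <| hf.hasFDerivAt.comp_hasDerivAt_of_eq (f := fun s => (s, p.2)) p.1
    ((hasDerivAt_id _).prodMk (hasDerivAt_const _ _)) rfl

theorem d2_eq_fderiv (hf : DifferentiableAt ℝ f p) : d2 f p = fderiv ℝ f p (0, 1) :=
  (hasDerivAt_d2 hf).unique <| hf.hasFDerivAt.comp_hasDerivAt_of_eq (f := fun t => (p.1, t)) p.2
    ((hasDerivAt_const _ _).prodMk (hasDerivAt_id _)) rfl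

@[simp] theorem d1_const (c : ℝ) : d1 (fun _ => c) p = 0 := deriv_const _ _
@[simp] theorem d2_const (c : ℝ) : d2 (fun _ => c) p = 0 := deriv_const _ _
@[simp] theorem d1_fst : d1 Prod.fst p = 1 := deriv_id _
@[simp] theorem d2_fst : d2 Prod.fst p = 0 := deriv_const _ _
@[simp] theorem d1_snd : d1 Prod.snd p = 0 := deriv_const _ _
@[simp] theorem d2_snd : d2 Prod.snd p = 1 := deriv_id _

@[simp] theorem d1_add (hf : DifferentiableAt ℝ f p) (hg : DifferentiableAt ℝ g p) :
    d1 (fun q => f q + g q) p = d1 f p + d1 g p :=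
  ((hasDerivAt_d1 hf).add (hasDerivAt_d1 hg)).deriv

@[simp] theorem d2_add (hf : DifferentiableAt ℝ f p) (hg : DifferentiableAt ℝ g p) :
    d2 (fun q => f q + g q) p = d2 f p + d2 g p :=
  ((hasDerivAt_d2 hf).add (hasDerivAt_d2 hg)).deriv

@[simp] theorem d2_neg : d2 (fun q => -f q) p = -d2 f p := deriv.neg

@[simp] theorem d1_sub (hf : DifferentiableAt ℝ f p) (hg : DifferentiableAt ℝ g p) :
    d1 (fun q => f q - g q) p = d1 f p - d1 g p :=
  ((hasDerivAt_d1 hf).sub (hasDerivAt_d1 hg)).deriv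

@[simp] theorem d2_sub (hf : DifferentiableAt ℝ f p) (hg : DifferentiableAt ℝ g p) :
    d2 (fun q => f q - g q) p = d2 f p - d2 g p :=
  ((hasDerivAt_d2 hf).sub (hasDerivAt_d2 hg)).deriv

@[simp] theorem d1_mul (hf : DifferentiableAt ℝ f p) (hg : DifferentiableAt ℝ g p) :
    d1 (fun q => f q * g q) p = d1 f p * g p + f p * d1 g p :=
  ((hasDerivAt_d1 hf).mul (hasDerivAt_d1 hg)).deriv

@[simp] theorem d2_mul (hf : DifferentiableAt ℝ f p) (hg : DifferentiableAt ℝ g p) :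
    d2 (fun q => f q * g q) p = d2 f p * g p + f p * d2 g p :=
  ((hasDerivAt_d2 hf).mul (hasDerivAt_d2 hg)).deriv

@[simp] theorem d1_pow (hf : DifferentiableAt ℝ f p) (n : ℕ) :
    d1 (fun q => f q ^ n) p = n * f p ^ (n - 1) * d1 f p :=
  ((hasDerivAt_d1 hf).pow n).deriv

@[simp] theorem d2_pow (hf : DifferentiableAt ℝ f p) (n : ℕ) :
    d2 (fun q => f q ^ n) p = n * f p ^ (n - 1) * d2 f p :=
  ((hasDerivAt_d2 hf).pow n).deriv

theorem Filter.EventuallyEq.d1_eq (h : f =ᶠ[𝓝 p] g) : d1 f p = d1 g p :=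
  EventuallyEq.deriv_eq <| h.comp_tendsto
    ((continuous_id.prodMk continuous_const).tendsto' p.1 p rfl)

theorem Filter.EventuallyEq.d2_eq (h : f =ᶠ[𝓝 p] g) : d2 f p = d2 g p :=
  EventuallyEq.deriv_eq <| h.comp_tendsto
    ((continuous_const.prodMk continuous_id).tendsto' p.2 p rfl)

theorem d2_d1_eq_d1_d2 (hf : ContDiffAt ℝ 2 f p) : d2 (d1 f) p = d1 (d2 f) p := by
  have hdiff : ∀ᶠ q in 𝓝 p, DifferentiableAt ℝ f q :=
    (hf.eventually (by simp)).mono fun q hq => hq.differentiableAt (by norm_num)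
  have hf' : DifferentiableAt ℝ (fderiv ℝ f) p :=
    (hf.fderiv_right (m := 1) (by norm_num)).differentiableAt (by norm_num)
  have happly : ∀ v, DifferentiableAt ℝ (fun q => fderiv ℝ f q v) p := fun v => by fun_prop
  rw [EventuallyEq.d2_eq (hdiff.mono fun q hq => d1_eq_fderiv hq),
    EventuallyEq.d1_eq (hdiff.mono fun q hq => d2_eq_fderiv hq),
    d2_eq_fderiv (happly _), d1_eq_fderiv (happly _), fderiv_clm_apply hf' (differentiableAt_const _),
    fderiv_clm_apply hf' (differentiableAt_const _)]
  simpa using hf.isSymmSndFDerivAt (by simp) (0, 1) (1, 0)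

theorem ContDiffOn.d2_d1_eq_d1_d2 (hU : IsOpen U)
    (hf : ContDiffOn ℝ (⊤ : ℕ∞) f U) (hp : p ∈ U) : d2 (d1 f) p = d1 (d2 f) p :=
  _root_.d2_d1_eq_d1_d2 ((hf.contDiffAt (hU.mem_nhds hp)).of_le (by decide))

theorem d1_eq_of_eqOn (hU : IsOpen U) (h : Set.EqOn f g U) (hp : p ∈ U) :
    d1 f p = d1 g p :=
  EventuallyEq.d1_eq (eventuallyEq_of_mem (hU.mem_nhds hp) h)

theorem d2_eq_of_eqOn (hU : IsOpen U) (h : Set.EqOn f g U) (hp : p ∈ U) :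
    d2 f p = d2 g p :=
  EventuallyEq.d2_eq (eventuallyEq_of_mem (hU.mem_nhds hp) h)

theorem ContDiffOn.d1 (hU : IsOpen U) (hf : ContDiffOn ℝ (⊤ : ℕ∞) f U) :
    ContDiffOn ℝ (⊤ : ℕ∞) (d1 f) U :=
  ((hf.fderiv_of_isOpen hU le_rfl).clm_apply contDiffOn_const).congr fun _ hq =>
    d1_eq_fderiv ((hf.contDiffAt (hU.mem_nhds hq)).differentiableAt (by decide))

theorem ContDiffOn.d2 (hU : IsOpen U) (hf : ContDiffOn ℝ (⊤ : ℕ∞) f U) :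
    ContDiffOn ℝ (⊤ : ℕ∞) (d2 f) U :=
  ((hf.fderiv_of_isOpen hU le_rfl).clm_apply contDiffOn_const).congr fun _ hq =>
    d2_eq_fderiv ((hf.contDiffAt (hU.mem_nhds hq)).differentiableAt (by decide))

end PartialDerivatives

section ReducedEquation

variable {U : Set (ℝ × ℝ)} {w : ℝ × ℝ → ℝ} {q : ℝ × ℝ}

noncomputable def xiInt (w : ℝ × ℝ → ℝ) (p : ℝ × ℝ) : ℝ :=
  d1 (d1 w) p - p.2 * d1 (zetaInt w) p - (1 / 3) * (d2 (d2 w) p) ^ 3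

theorem IsRedSolOn.contDiffOn_zetaInt (hU : IsOpen U) (hred : IsRedSolOn w U) :
    ContDiffOn ℝ (⊤ : ℕ∞) (zetaInt w) U :=
  ((hred.1.d2 hU).d1 hU).add (contDiffOn_const.mul (((hred.1.d2 hU).d2 hU).pow 2))

theorem IsRedSolOn.differentiableAt (hU : IsOpen U) (hred : IsRedSolOn w U) (hq : q ∈ U) :
    DifferentiableAt ℝ w q ∧ DifferentiableAt ℝ (d1 w) q ∧ DifferentiableAt ℝ (d2 w) q ∧
      DifferentiableAt ℝ (d1 (d1 w)) q ∧ DifferentiableAt ℝ (d1 (d2 w)) q ∧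
      DifferentiableAt ℝ (d2 (d2 w)) q ∧ DifferentiableAt ℝ (zetaInt w) q ∧
      DifferentiableAt ℝ (d1 (zetaInt w)) q := by
  have diff {f : ℝ × ℝ → ℝ} (hf : ContDiffOn ℝ (⊤ : ℕ∞) f U) : DifferentiableAt ℝ f q :=
    (hf.contDiffAt (hU.mem_nhds hq)).differentiableAt (by decide)
  have hw := hred.1
  have hζ := hred.contDiffOn_zetaInt hU
  exact ⟨diff hw, diff (hw.d1 hU), diff (hw.d2 hU), diff ((hw.d1 hU).d1 hU),
    diff ((hw.d2 hU).d1 hU), diff ((hw.d2 hU).d2 hU), diff hζ, diff (hζ.d1 hU)⟩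

theorem IsRedSolOn.d1_d2_d2 (hred : IsRedSolOn w U) (hq : q ∈ U) :
    d1 (d2 (d2 w)) q = -(d2 (d2 w) q * d2 (d2 (d2 w)) q) :=
  eq_neg_of_add_eq_zero_left (hred.2 q hq)

theorem IsRedSolOn.d2_zetaInt (hU : IsOpen U) (hred : IsRedSolOn w U) (hq : q ∈ U) :
    d2 (zetaInt w) q = 0 := by
  obtain ⟨-, -, -, -, h12, h22, -, -⟩ := hred.differentiableAt hU hq
  have hclair := (hred.1.d2 hU).d2_d1_eq_d1_d2 hU hq
  unfold zetaInt
  simp (disch := fun_prop) [hclair, hred.d1_d2_d2 hq]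
  ring

theorem IsRedSolOn.d2_d1_zetaInt (hU : IsOpen U) (hred : IsRedSolOn w U) (hq : q ∈ U) :
    d2 (d1 (zetaInt w)) q = 0 := by
  rw [(hred.contDiffOn_zetaInt hU).d2_d1_eq_d1_d2 hU hq,
    d1_eq_of_eqOn hU (fun p hp => hred.d2_zetaInt hU hp) hq, d1_const]

theorem IsRedSolOn.d2_d1_d1 (hU : IsOpen U) (hred : IsRedSolOn w U) (hq : q ∈ U) :
    d2 (d1 (d1 w)) q = d1 (zetaInt w) q - d2 (d2 w) q * d1 (d2 (d2 w)) q := by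
  obtain ⟨-, -, -, -, -, h22, hζ, -⟩ := hred.differentiableAt hU hq
  have h12 : Set.EqOn (d1 (d2 w)) (fun p => zetaInt w p - 1 / 2 * d2 (d2 w) p ^ 2) U :=
    fun p _ => by simp only [zetaInt]; ring
  rw [(hred.1.d1 hU).d2_d1_eq_d1_d2 hU hq,
    d1_eq_of_eqOn hU (fun p hp => hred.1.d2_d1_eq_d1_d2 hU hp) hq, d1_eq_of_eqOn hU h12 hq]
  simp (disch := fun_prop)
  ring

theorem IsRedSolOn.d2_xiInt (hU : IsOpen U) (hred : IsRedSolOn w U) (hq : q ∈ U) :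
    d2 (xiInt w) q = 0 := by
  obtain ⟨-, -, -, h11, -, h22, -, hζ1⟩ := hred.differentiableAt hU hq
  unfold xiInt
  simp (disch := fun_prop) [hred.d2_d1_d1 hU hq, hred.d2_d1_zetaInt hU hq, hred.d1_d2_d2 hq]
  ring

theorem isCosymOn_of_eqOn {γ B : ℝ × ℝ → ℝ} (hU : IsOpen U)
    (hγ : ∀ p ∈ U, d1 γ p + d2 (d2 w) p * d2 γ p = B p) (hB : ∀ p ∈ U, d2 (d2 B) p = 0) :
    IsCosymOn w γ U := fun p hp => by
  rw [d2_eq_of_eqOn hU (fun q hq => d2_eq_of_eqOn hU hγ hq) hp]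
  exact hB p hp

theorem d2_d2_eq_zero_of_d2_eq_zero {B : ℝ × ℝ → ℝ} (hU : IsOpen U)
    (hB : ∀ p ∈ U, d2 B p = 0) (hq : q ∈ U) : d2 (d2 B) q = 0 := by
  rw [d2_eq_of_eqOn hU hB hq, d2_const]

theorem d2_d2_snd_mul_eq_zero {c : ℝ × ℝ → ℝ} (hU : IsOpen U)
    (hc : ∀ p ∈ U, DifferentiableAt ℝ c p) (hc2 : ∀ p ∈ U, d2 c p = 0) (hq : q ∈ U) :
    d2 (d2 fun p => p.2 * c p) q = 0 := by
  have h : Set.EqOn (d2 fun p => p.2 * c p) c U := fun p hp => by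
    simp (disch := fun_prop) [hc2 p hp]
  rw [d2_eq_of_eqOn hU h hq, hc2 q hq]

theorem IsRedSolOn.isCosymOn₁ (hU : IsOpen U) (hred : IsRedSolOn w U) :
    IsCosymOn w (fun p => d2 w p - (1 / 2) * p.1 * (d2 (d2 w) p) ^ 2) U := by
  refine isCosymOn_of_eqOn hU (B := zetaInt w) (fun q hq => ?_)
    fun q hq => d2_d2_eq_zero_of_d2_eq_zero hU (fun p hp => hred.d2_zetaInt hU hp) hq
  obtain ⟨-, -, h2, -, -, h22, -, -⟩ := hred.differentiableAt hU hq
  simp (disch := fun_prop) [hred.d1_d2_d2 hq]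
  simp only [zetaInt]
  ring

theorem IsRedSolOn.isCosymOn₂ (hU : IsOpen U) (hred : IsRedSolOn w U) :
    IsCosymOn w (fun p =>
      (d2 w p - (1 / 2) * p.1 * (d2 (d2 w) p) ^ 2) * d2 (d2 w) p - p.2 * zetaInt w p) U := by
  refine isCosymOn_of_eqOn hU (B := fun p => p.2 * -d1 (zetaInt w) p) (fun q hq => ?_)
    fun q hq => d2_d2_snd_mul_eq_zero hU (fun p hp => ?_) (fun p hp => ?_) hq
  · obtain ⟨-, -, h2, -, -, h22, hζ, -⟩ := hred.differentiableAt hU hq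
    simp (disch := fun_prop) [hred.d1_d2_d2 hq, hred.d2_zetaInt hU hq]
    simp only [zetaInt]
    ring
  · obtain ⟨-, -, -, -, -, -, -, hζ1⟩ := hred.differentiableAt hU hp
    fun_prop
  · obtain ⟨-, -, -, -, -, -, -, hζ1⟩ := hred.differentiableAt hU hp
    simp (disch := fun_prop) [hred.d2_d1_zetaInt hU hp]

theorem IsRedSolOn.isCosymOn₃ (hU : IsOpen U) (hred : IsRedSolOn w U) :
    IsCosymOn w (fun p => d1 w p - p.2 * zetaInt w p + (1 / 6) * p.1 * (d2 (d2 w) p) ^ 3) U := by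
  refine isCosymOn_of_eqOn hU (B := xiInt w) (fun q hq => ?_)
    fun q hq => d2_d2_eq_zero_of_d2_eq_zero hU (fun p hp => hred.d2_xiInt hU hp) hq
  obtain ⟨-, h1, -, h11, -, h22, hζ, -⟩ := hred.differentiableAt hU hq
  simp (disch := fun_prop) [hred.d1_d2_d2 hq, hred.d2_zetaInt hU hq,
    hred.1.d2_d1_eq_d1_d2 hU hq]
  simp only [xiInt, zetaInt]
  ring

theorem IsRedSolOn.isCosymOn₄ (hU : IsOpen U) (hred : IsRedSolOn w U) :
    IsCosymOn w (fun p =>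
      p.1 * (d1 w p - p.2 * zetaInt w p) + p.2 * d2 w p - w p
        + (1 / 12) * p.1 ^ 2 * (d2 (d2 w) p) ^ 3
        - (1 / 4) * p.2 ^ 2 * d2 (d2 w) p) U := by
  refine isCosymOn_of_eqOn hU (B := fun p => p.1 * xiInt w p) (fun q hq => ?_)
    fun q hq => d2_d2_eq_zero_of_d2_eq_zero hU (fun p hp => ?_) hq
  · obtain ⟨hw, h1, h2, h11, -, h22, hζ, -⟩ := hred.differentiableAt hU hq
    simp (disch := fun_prop) [hred.d1_d2_d2 hq, hred.d2_zetaInt hU hq,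
      hred.1.d2_d1_eq_d1_d2 hU hq]
    simp only [xiInt, zetaInt]
    ring
  · obtain ⟨-, -, -, h11, -, h22, -, hζ1⟩ := hred.differentiableAt hU hp
    have hξ : DifferentiableAt ℝ (xiInt w) p := by unfold xiInt; fun_prop
    simp (disch := fun_prop) [hred.d2_xiInt hU hp]

theorem IsRedSolOn.isCosymOn₅ (hU : IsOpen U) (hred : IsRedSolOn w U) :
    IsCosymOn w (fun p =>
      (d2 w p - (1 / 2) * p.1 * (d2 (d2 w) p) ^ 2) * theta0 w p
        + p.1 * p.2 * zetaInt w p) U := by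
  refine isCosymOn_of_eqOn hU (B := fun p => p.2 * (2 * zetaInt w p + p.1 * d1 (zetaInt w) p))
    (fun q hq => ?_) fun q hq => d2_d2_snd_mul_eq_zero hU (fun p hp => ?_) (fun p hp => ?_) hq
  · obtain ⟨-, -, h2, -, -, h22, hζ, -⟩ := hred.differentiableAt hU hq
    simp only [theta0]
    simp (disch := fun_prop) [hred.d1_d2_d2 hq, hred.d2_zetaInt hU hq]
    simp only [zetaInt]
    ring
  · obtain ⟨-, -, -, -, -, -, hζ, hζ1⟩ := hred.differentiableAt hU hp
    fun_prop
  · obtain ⟨-, -, -, -, -, -, hζ, hζ1⟩ := hred.differentiableAt hU hp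
    simp (disch := fun_prop) [hred.d2_zetaInt hU hp, hred.d2_d1_zetaInt hU hp]

end ReducedEquation

/-- Five particular cosymmetries of the reduced equation along `w`. -/
theorem statement11 (U : Set (ℝ × ℝ)) (hU : IsOpen U) (w : ℝ × ℝ → ℝ)
    (hred : IsRedSolOn w U) :
    IsCosymOn w (fun p => d2 w p - (1 / 2) * p.1 * (d2 (d2 w) p) ^ 2) U ∧
    IsCosymOn w (fun p =>
      (d2 w p - (1 / 2) * p.1 * (d2 (d2 w) p) ^ 2) * d2 (d2 w) p - p.2 * zetaInt w p) U ∧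
    IsCosymOn w (fun p =>
      d1 w p - p.2 * zetaInt w p + (1 / 6) * p.1 * (d2 (d2 w) p) ^ 3) U ∧
    IsCosymOn w (fun p =>
      p.1 * (d1 w p - p.2 * zetaInt w p) + p.2 * d2 w p - w p
        + (1 / 12) * p.1 ^ 2 * (d2 (d2 w) p) ^ 3
        - (1 / 4) * p.2 ^ 2 * d2 (d2 w) p) U ∧
    IsCosymOn w (fun p =>
      (d2 w p - (1 / 2) * p.1 * (d2 (d2 w) p) ^ 2) * theta0 w p
        + p.1 * p.2 * zetaInt w p) U :=
  ⟨hred.isCosymOn₁ hU, hred.isCosymOn₂ hU, hred.isCosymOn₃ hU, hred.isCosymOn₄ hU,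
    hred.isCosymOn₅ hU⟩
end

section
/- Let ε ∈ {1, −1} and let Ω := {(z₁,z₂) ∈ ℝ² : 2z₂ < z₁²}. Then the function h(z₁,z₂) := ε·(z₁² − 2z₂)^{1/2} + z₁ is a smooth solution of the inviscid Burgers equation ∂₁h + h·∂₂h = 0 on Ω, and the function w(z₁,z₂) := ε·(1/15)(z₁² − 2z₂)^{5/2} + ½z₁z₂² is a smooth solution of the reduced equation ∂₁∂₂²w + (∂₂²w)·(∂₂³w) = 0 on Ω. -/
/-!
Write `S = √(z₁² − 2z₂)`, which is smooth and positive on `Ω`. Then `∂₁S = z₁/S` and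
`∂₂S = −1/S`, so for `h = εS + z₁` the Burgers expression collapses to `1 − ε²`. Differentiating
twice in `z₂` gives `∂₂²w = h` on `Ω`; since `Ω` is open, the reduced equation for `w` is then
literally the Burgers equation for `h`.
-/

open Real Set Filter Topology

lemma d1_congr_of_eqOn {f g : ℝ × ℝ → ℝ} {U : Set (ℝ × ℝ)} (hU : IsOpen U) (hfg : EqOn f g U)
    {p : ℝ × ℝ} (hp : p ∈ U) : d1 f p = d1 g p := by
  have hline : ∀ᶠ s in 𝓝 p.1, (s, p.2) ∈ U :=
    (continuous_id.prodMk continuous_const).continuousAt.preimage_mem_nhds (hU.mem_nhds hp)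
  exact EventuallyEq.deriv_eq (hline.mono fun s hs => hfg hs)

lemma d2_congr_of_eqOn {f g : ℝ × ℝ → ℝ} {U : Set (ℝ × ℝ)} (hU : IsOpen U) (hfg : EqOn f g U)
    {p : ℝ × ℝ} (hp : p ∈ U) : d2 f p = d2 g p := by
  have hline : ∀ᶠ s in 𝓝 p.2, (p.1, s) ∈ U :=
    (continuous_const.prodMk continuous_id).continuousAt.preimage_mem_nhds (hU.mem_nhds hp)
  exact EventuallyEq.deriv_eq (hline.mono fun s hs => hfg hs)

theorem IsBurgersSolOn.isRedSolOn {w h : ℝ × ℝ → ℝ} {U : Set (ℝ × ℝ)} (hU : IsOpen U)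
    (hh : IsBurgersSolOn h U) (hw : ContDiffOn ℝ (⊤ : ℕ∞) w U) (hwh : EqOn (d2 (d2 w)) h U) :
    IsRedSolOn w U := by
  refine ⟨hw, fun p hp => ?_⟩
  rw [d1_congr_of_eqOn hU hwh hp, d2_congr_of_eqOn hU hwh hp, hwh hp]
  exact hh.2 p hp

lemma isOpen_setOf_two_mul_snd_lt_fst_sq : IsOpen {p : ℝ × ℝ | 2 * p.2 < p.1 ^ 2} :=
  isOpen_lt (by fun_prop) (by fun_prop)

lemma contDiffOn_sqrt_fst_sq_sub_two_mul_snd :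
    ContDiffOn ℝ (⊤ : ℕ∞) (fun p : ℝ × ℝ => √(p.1 ^ 2 - 2 * p.2))
      {p : ℝ × ℝ | 2 * p.2 < p.1 ^ 2} := fun p hp =>
  ((contDiffAt_sqrt (sub_pos.2 hp).ne').comp p
    ((contDiff_fst.pow 2).sub (contDiff_const.mul contDiff_snd)).contDiffAt).contDiffWithinAt

section Derivatives

variable {x y : ℝ}

lemma hasDerivAt_sqrt_sq_sub_two_mul_left (hxy : 2 * y < x ^ 2) :
    HasDerivAt (fun s => √(s ^ 2 - 2 * y)) (x / √(x ^ 2 - 2 * y)) x := by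
  have hS : √(x ^ 2 - 2 * y) ≠ 0 := (sqrt_pos.2 (sub_pos.2 hxy)).ne'
  convert ((hasDerivAt_pow 2 x).sub_const (2 * y)).sqrt (sub_pos.2 hxy).ne' using 1
  field_simp
  ring

lemma hasDerivAt_sqrt_sq_sub_two_mul_right (hxy : 2 * y < x ^ 2) :
    HasDerivAt (fun s => √(x ^ 2 - 2 * s)) (-(√(x ^ 2 - 2 * y))⁻¹) y := by
  have hS : √(x ^ 2 - 2 * y) ≠ 0 := (sqrt_pos.2 (sub_pos.2 hxy)).ne'
  have hlin : HasDerivAt (fun s => x ^ 2 - 2 * s) (-2) y := by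
    simpa using ((hasDerivAt_id' y).const_mul 2).const_sub (x ^ 2)
  convert hlin.sqrt (sub_pos.2 hxy).ne' using 1
  field_simp

lemma hasDerivAt_sqrt_sq_sub_two_mul_right_pow (n : ℕ) (hxy : 2 * y < x ^ 2) :
    HasDerivAt (fun s => √(x ^ 2 - 2 * s) ^ (n + 2)) (-(n + 2) * √(x ^ 2 - 2 * y) ^ n) y := by
  have hS : √(x ^ 2 - 2 * y) ≠ 0 := (sqrt_pos.2 (sub_pos.2 hxy)).ne'
  refine ((hasDerivAt_sqrt_sq_sub_two_mul_right hxy).fun_pow (n + 2)).congr_deriv ?_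
  rw [show n + 2 - 1 = n + 1 by omega, pow_succ]
  field_simp
  push_cast
  ring

end Derivatives

section Solutions

variable (ε : ℝ) {p : ℝ × ℝ}

noncomputable def burgersSol (p : ℝ × ℝ) : ℝ := ε * √(p.1 ^ 2 - 2 * p.2) + p.1

noncomputable def reducedSol (p : ℝ × ℝ) : ℝ :=
  ε * (1 / 15) * √(p.1 ^ 2 - 2 * p.2) ^ 5 + (1 / 2) * p.1 * p.2 ^ 2

lemma d1_burgersSol (hp : 2 * p.2 < p.1 ^ 2) :
    d1 (burgersSol ε) p = ε * (p.1 / √(p.1 ^ 2 - 2 * p.2)) + 1 :=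
  (((hasDerivAt_sqrt_sq_sub_two_mul_left hp).const_mul ε).add (hasDerivAt_id' p.1)).deriv

lemma d2_burgersSol (hp : 2 * p.2 < p.1 ^ 2) :
    d2 (burgersSol ε) p = ε * -(√(p.1 ^ 2 - 2 * p.2))⁻¹ :=
  (((hasDerivAt_sqrt_sq_sub_two_mul_right hp).const_mul ε).add_const p.1).deriv

theorem isBurgersSolOn_burgersSol (hε : ε ^ 2 = 1) :
    IsBurgersSolOn (burgersSol ε) {p : ℝ × ℝ | 2 * p.2 < p.1 ^ 2} := by
  refine ⟨(contDiffOn_const.mul contDiffOn_sqrt_fst_sq_sub_two_mul_snd).add contDiffOn_fst,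
    fun p hp => ?_⟩
  have hS : √(p.1 ^ 2 - 2 * p.2) ≠ 0 := (sqrt_pos.2 (sub_pos.2 hp)).ne'
  rw [d1_burgersSol ε hp, d2_burgersSol ε hp, burgersSol]
  linear_combination -hε - ε ^ 2 * mul_inv_cancel₀ hS

lemma d2_reducedSol (hp : 2 * p.2 < p.1 ^ 2) :
    d2 (reducedSol ε) p = -(ε / 3) * √(p.1 ^ 2 - 2 * p.2) ^ 3 + p.1 * p.2 := by
  refine (((hasDerivAt_sqrt_sq_sub_two_mul_right_pow 3 hp).const_mul (ε * (1 / 15))).fun_add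
    ((hasDerivAt_pow 2 p.2).const_mul ((1 / 2) * p.1))).deriv.trans ?_
  norm_num
  ring

lemma eqOn_d2_d2_reducedSol :
    EqOn (d2 (d2 (reducedSol ε))) (burgersSol ε) {p : ℝ × ℝ | 2 * p.2 < p.1 ^ 2} := by
  intro p hp
  have hd2 : EqOn (d2 (reducedSol ε))
      (fun q => -(ε / 3) * √(q.1 ^ 2 - 2 * q.2) ^ 3 + q.1 * q.2)
      {p : ℝ × ℝ | 2 * p.2 < p.1 ^ 2} := fun q hq => d2_reducedSol ε hq
  rw [d2_congr_of_eqOn isOpen_setOf_two_mul_snd_lt_fst_sq hd2 hp]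
  refine (((hasDerivAt_sqrt_sq_sub_two_mul_right_pow 1 hp).const_mul (-(ε / 3))).fun_add
    ((hasDerivAt_id' p.2).const_mul p.1)).deriv.trans ?_
  rw [burgersSol]
  ring

theorem isRedSolOn_reducedSol (hε : ε ^ 2 = 1) :
    IsRedSolOn (reducedSol ε) {p : ℝ × ℝ | 2 * p.2 < p.1 ^ 2} :=
  (isBurgersSolOn_burgersSol ε hε).isRedSolOn isOpen_setOf_two_mul_snd_lt_fst_sq
    ((contDiffOn_const.mul (contDiffOn_sqrt_fst_sq_sub_two_mul_snd.pow 5)).add (by fun_prop))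
    (eqOn_d2_d2_reducedSol ε)

end Solutions

/-- Solutions obtained by reduction 1.3: the solution
`h = ε(z₁² − 2z₂)^{1/2} + z₁` of the inviscid Burgers equation and the solution
`w = ε(1/15)(z₁² − 2z₂)^{5/2} + ½z₁z₂²` of the reduced equation on `{2z₂ < z₁²}`. -/
theorem statement15 (ε : ℝ) (hε : ε = 1 ∨ ε = -1) :
    IsBurgersSolOn (fun p => ε * Real.sqrt (p.1 ^ 2 - 2 * p.2) + p.1)
      {p : ℝ × ℝ | 2 * p.2 < p.1 ^ 2} ∧
    IsRedSolOn (fun p => ε * (1 / 15) * (Real.sqrt (p.1 ^ 2 - 2 * p.2)) ^ 5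
        + (1 / 2) * p.1 * p.2 ^ 2)
      {p : ℝ × ℝ | 2 * p.2 < p.1 ^ 2} := by
  have hε_sq : ε ^ 2 = 1 := by rcases hε with rfl | rfl <;> norm_num
  exact ⟨isBurgersSolOn_burgersSol ε hε_sq, isRedSolOn_reducedSol ε hε_sq⟩
end
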